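/- Let R be a Noetherian ring and M an Artinian R-module. Then Supp_R(M) ⊆ Cos_R(M), where Cos_R(M) = {p ∈ Spec R | Hom_R(R_p, M) ≠ 0} is the co-support of M. -/

import Mathlib

/-!
A prime `p` in the support of `M` contains an associated prime `q` of `M`, so `R ⧸ q` embeds
in `M`. This makes `R ⧸ q` an Artinian domain, hence a field: `q` is maximal, so `q = p`, and
`R_p → κ(p) ≅ R ⧸ p ↪ M` is a nonzero element of `Hom_R(R_p, M)`.
-/

/-- The co-support of `M`: the set of primes `p` with `Hom_R(R_p, M) ≠ 0`. -/
def coSupport (R : Type*) [CommRing R] (M : Type*) [AddCommGroup M] [Module R M] :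
    Set (PrimeSpectrum R) :=
  {p | Nontrivial (Localization.AtPrime p.asIdeal →ₗ[R] M)}

section

variable {R M : Type*} [CommRing R] [AddCommGroup M] [Module R M] [IsNoetherianRing R]

open Module.associatedPrimes in
theorem Module.exists_isAssociatedPrime_le_of_mem_support {p : PrimeSpectrum R}
    (hp : p ∈ Module.support R M) :
    ∃ q : Ideal R, IsAssociatedPrime q M ∧ q ≤ p.asIdeal := by
  let Rₚ := Localization.AtPrime p.asIdeal
  have : Nontrivial (LocalizedModule p.asIdeal.primeCompl M) := Module.mem_support_iff.mp hp
  obtain ⟨q, hq⟩ := associatedPrimes.nonempty Rₚ (LocalizedModule p.asIdeal.primeCompl M)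
  refine ⟨q.comap (algebraMap R Rₚ), ?_, ?_⟩
  · rwa [← preimage_comap_associatedPrimes_eq_associatedPrimes_of_isLocalizedModule
      p.asIdeal.primeCompl Rₚ (LocalizedModule.mkLinearMap p.asIdeal.primeCompl M)] at hq
  · exact Set.disjoint_compl_left_iff_subset.mp
      ((IsLocalization.disjoint_under_iff p.asIdeal.primeCompl Rₚ q).mpr hq.isPrime.ne_top)

theorem IsAssociatedPrime.isMaximal_of_isArtinian [IsArtinian R M] {q : Ideal R}
    (hq : IsAssociatedPrime q M) : q.IsMaximal := by
  obtain ⟨_, f, hf⟩ := (isAssociatedPrime_iff_exists_injective_linearMap q M).mp hq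
  have : IsArtinian R (R ⧸ q) := isArtinian_of_injective f hf
  have : IsArtinianRing (R ⧸ q) := isArtinian_of_tower R this
  exact Ideal.Quotient.maximal_of_isField _ (IsArtinianRing.isField_of_isDomain _)

theorem IsAssociatedPrime.nontrivial_linearMap_localization {p : Ideal R} [p.IsMaximal]
    (hp : IsAssociatedPrime p M) : Nontrivial (Localization.AtPrime p →ₗ[R] M) := by
  obtain ⟨-, f, hf⟩ := (isAssociatedPrime_iff_exists_injective_linearMap p M).mp hp
  let e : (R ⧸ p) ≃ₐ[R] p.ResidueField :=
    AlgEquiv.ofBijective (IsScalarTower.toAlgHom R (R ⧸ p) p.ResidueField)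
      p.bijective_algebraMap_quotient_residueField
  let g : Localization.AtPrime p →ₗ[R] M := f ∘ₗ e.symm.toLinearMap ∘ₗ
    (IsScalarTower.toAlgHom R (Localization.AtPrime p) p.ResidueField).toLinearMap
  have hg : g 1 = f 1 := by simp [g]
  refine ⟨g, 0, fun h => one_ne_zero (hf ?_)⟩
  rw [← hg, h, LinearMap.zero_apply, map_zero]

end

/-- Let `R` be a Noetherian ring and `M` an Artinian `R`-module. Then
`Supp_R(M) ⊆ Cos_R(M)`. -/
theorem support_subset_coSupport
    (R M : Type*) [CommRing R] [IsNoetherianRing R]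
    [AddCommGroup M] [Module R M] [IsArtinian R M] :
    Module.support R M ⊆ coSupport R M := by
  intro p hp
  obtain ⟨q, hq, hqp⟩ := Module.exists_isAssociatedPrime_le_of_mem_support hp
  have : q.IsMaximal := hq.isMaximal_of_isArtinian
  obtain rfl : q = p.asIdeal := this.eq_of_le p.isPrime.ne_top hqp
  exact hq.nontrivial_linearMap_localization
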